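/- The regularized product Δ = 5^{1/4} exp(−ln²(5)/(8 ln φ)) c / φ^{1/12} satisfies 0 < Δ < 1, where c = ∏_{n=1}^∞ (1 − (−φ)^{−2n}) and φ = (1+√5)/2. -/
import Mathlib

lemma aux_weier {f : ℕ → ℝ} (h0 : ∀ i, 0 ≤ f i) (h1 : ∀ i, f i ≤ 1) (s : Finset ℕ) :
    1 - ∑ i ∈ s, f i ≤ ∏ i ∈ s, (1 - f i) := by
  classical
  induction s using Finset.induction_on with
  | empty => simp
  | @insert j s hj ih =>
    rw [Finset.prod_insert hj, Finset.sum_insert hj]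
    have hprod0 : 0 ≤ ∏ i ∈ s, (1 - f i) :=
      Finset.prod_nonneg fun i _ => by linarith [h1 i]
    have hsum0 : 0 ≤ ∑ i ∈ s, f i := Finset.sum_nonneg fun i _ => h0 i
    nlinarith [h0 j, h1 j]

theorem regularized_product_pos_lt_one :
    0 < (5 : ℝ) ^ ((1 : ℝ) / 4) *
          Real.exp (-(Real.log 5 ^ 2) / (8 * Real.log ((1 + Real.sqrt 5) / 2))) *
          (∏' n : ℕ, (1 - (-((1 + Real.sqrt 5) / 2)) ^ (-(2 * ((n : ℤ) + 1))))) /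
          ((1 + Real.sqrt 5) / 2) ^ ((1 : ℝ) / 12) ∧
      (5 : ℝ) ^ ((1 : ℝ) / 4) *
          Real.exp (-(Real.log 5 ^ 2) / (8 * Real.log ((1 + Real.sqrt 5) / 2))) *
          (∏' n : ℕ, (1 - (-((1 + Real.sqrt 5) / 2)) ^ (-(2 * ((n : ℤ) + 1))))) /
          ((1 + Real.sqrt 5) / 2) ^ ((1 : ℝ) / 12) < 1 := by
  have hs5 : (2:ℝ) < Real.sqrt 5 := by
    have := Real.sq_sqrt (by norm_num : (5:ℝ) ≥ 0)
    nlinarith [Real.sqrt_nonneg 5]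
  have hs5' : Real.sqrt 5 < 3 := by
    have := Real.sq_sqrt (by norm_num : (5:ℝ) ≥ 0)
    nlinarith [Real.sqrt_nonneg 5]
  set φ : ℝ := (1 + Real.sqrt 5) / 2 with hφdef
  have hφ1 : 1 < φ := by rw [hφdef]; linarith
  have hφ0 : 0 < φ := by linarith
  have hφ2 : (2:ℝ) < φ ^ 2 := by rw [hφdef]; nlinarith
  have hφ5 : φ ^ 2 ≤ 5 := by rw [hφdef]; nlinarith
  set x : ℝ := (φ ^ 2)⁻¹ with hxdef
  have hx0 : 0 < x := by positivity
  have hx2 : x < 1 / 2 := by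
    rw [hxdef]
    rw [inv_lt_iff_one_lt_mul₀ (by positivity)]
    linarith
  -- rewrite the factors
  have hterm : ∀ n : ℕ,
      (1 - (-φ) ^ (-(2 * ((n : ℤ) + 1)))) = 1 - x ^ (n + 1) := by
    intro n
    have h1 : (-φ) ^ (2 * ((n : ℤ) + 1)) = (φ ^ 2) ^ (n + 1) := by
      rw [zpow_mul]
      have h2 : (-φ) ^ (2:ℤ) = φ ^ 2 := by
        rw [zpow_two, sq]; ring
      rw [h2, ← zpow_natCast (φ ^ 2) (n + 1)]
      norm_cast
    rw [zpow_neg, h1, hxdef, ← inv_pow]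
  rw [tprod_congr hterm]
  set P : ℝ := ∏' n : ℕ, (1 - x ^ (n + 1)) with hPdef
  -- bounds on factors
  have hf0 : ∀ n : ℕ, 0 ≤ x ^ (n + 1) := fun n => by positivity
  have hf1 : ∀ n : ℕ, x ^ (n + 1) ≤ 1 := fun n =>
    pow_le_one₀ hx0.le (by linarith)
  -- sum bound
  have hsum : Summable (fun n : ℕ => x ^ (n + 1)) := by
    have := (summable_geometric_of_lt_one hx0.le (by linarith)).mul_left x
    refine this.congr fun n => ?_
    rw [pow_succ]; ring
  have htsum : ∑' n : ℕ, x ^ (n + 1) = x * (1 - x)⁻¹ := by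
    have h : ∀ n : ℕ, x ^ (n + 1) = x * x ^ n := fun n => by rw [pow_succ]; ring
    rw [tsum_congr h, tsum_mul_left, tsum_geometric_of_lt_one hx0.le (by linarith)]
  have hδ : x * (1 - x)⁻¹ < 1 := by
    rw [← div_eq_mul_inv, div_lt_one (by linarith)]
    linarith
  have hδ0 : 0 ≤ x * (1 - x)⁻¹ := mul_nonneg hx0.le (inv_nonneg.mpr (by linarith))
  have hlow : ∀ s : Finset ℕ, 1 - x * (1 - x)⁻¹ ≤ ∏ i ∈ s, (1 - x ^ (i + 1)) := by
    intro s
    have h1 : ∑ i ∈ s, x ^ (i + 1) ≤ x * (1 - x)⁻¹ := by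
      rw [← htsum]
      exact Summable.sum_le_tsum s (fun i _ => hf0 i) hsum
    have h2 := aux_weier hf0 hf1 s
    linarith
  have hhigh : ∀ s : Finset ℕ, ∏ i ∈ s, (1 - x ^ (i + 1)) ≤ 1 :=
    fun s => Finset.prod_le_one (fun i _ => by linarith [hf1 i]) (fun i _ => by linarith [hf0 i])
  have hP0 : 0 < P ∧ P ≤ 1 := by
    by_cases hm : Multipliable fun n : ℕ => (1 - x ^ (n + 1))
    · constructor
      · have := ge_of_tendsto' hm.hasProd hlow
        linarith
      · exact le_of_tendsto' hm.hasProd hhigh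
    · rw [hPdef, tprod_eq_one_of_not_multipliable hm]
      norm_num
  -- the scalar factor
  have hlog5 : 0 < Real.log 5 := Real.log_pos (by norm_num)
  have hlogφ : 0 < Real.log φ := Real.log_pos hφ1
  have h2logφ : 2 * Real.log φ ≤ Real.log 5 := by
    have := Real.log_le_log (by positivity) hφ5
    rwa [Real.log_pow, Nat.cast_ofNat] at this
  have hA : (5 : ℝ) ^ ((1 : ℝ) / 4) *
      Real.exp (-(Real.log 5 ^ 2) / (8 * Real.log φ)) ≤ 1 := by
    rw [Real.rpow_def_of_pos (by norm_num : (0:ℝ) < 5), ← Real.exp_add, Real.exp_le_one_iff]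
    have h1 : Real.log 5 / 4 ≤ Real.log 5 ^ 2 / (8 * Real.log φ) := by
      rw [le_div_iff₀ (by positivity)]
      nlinarith
    have h2 : -(Real.log 5 ^ 2) / (8 * Real.log φ) = -(Real.log 5 ^ 2 / (8 * Real.log φ)) := by
      ring
    rw [h2]
    linarith
  have hA0 : 0 < (5 : ℝ) ^ ((1 : ℝ) / 4) *
      Real.exp (-(Real.log 5 ^ 2) / (8 * Real.log φ)) := by positivity
  have hd1 : 1 < φ ^ ((1 : ℝ) / 12) :=
    Real.one_lt_rpow_iff_of_pos hφ0 |>.mpr (Or.inl ⟨hφ1, by norm_num⟩)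
  have hd0 : 0 < φ ^ ((1 : ℝ) / 12) := by positivity
  constructor
  · exact div_pos (mul_pos hA0 hP0.1) hd0
  · rw [div_lt_one hd0]
    calc (5 : ℝ) ^ ((1 : ℝ) / 4) *
        Real.exp (-(Real.log 5 ^ 2) / (8 * Real.log φ)) * P
        ≤ 1 * 1 := mul_le_mul hA hP0.2 hP0.1.le zero_le_one
      _ = 1 := by norm_num
      _ < φ ^ ((1 : ℝ) / 12) := hd1
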